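/- If x ≺ y for nonnegative vectors with nonincreasing components, then there exists an upper triangular row-stochastic matrix U with at most 2n−1 nonzero entries such that x = yU. -/

import Mathlib

open Finset Matrix

/-- Prefix sum of the first `k` components. -/
def psum {n : ℕ} (x : Fin n → ℝ) (k : ℕ) : ℝ :=
  ∑ i ∈ Finset.filter (fun i : Fin n => (i : ℕ) < k) Finset.univ, x i

/-- `x` is majorized by `y` (both assumed sorted nonincreasingly). -/
def Maj {n : ℕ} (x y : Fin n → ℝ) : Prop :=
  (∀ k, k < n → psum x k ≤ psum y k) ∧ (∑ i, x i) = ∑ i, y i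

/-- An A-transform: for `i < j` and `λ ∈ [0,1]`, replace `x i` by `x i + λ * x j`
and `x j` by `(1 - λ) * x j`. -/
def ATrans {n : ℕ} (x x' : Fin n → ℝ) : Prop :=
  ∃ (i j : Fin n) (lam : ℝ), i < j ∧ 0 ≤ lam ∧ lam ≤ 1 ∧
    x' = Function.update (Function.update x i (x i + lam * x j)) j ((1 - lam) * x j)

/-- A B-transform: for `i < j` and `λ ∈ [0,1]`, replace `y i` by `(1 - λ) * y i`
and `y j` by `y j + λ * y i`. -/
def BTrans {n : ℕ} (y y' : Fin n → ℝ) : Prop :=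
  ∃ (i j : Fin n) (lam : ℝ), i < j ∧ 0 ≤ lam ∧ lam ≤ 1 ∧
    y' = Function.update (Function.update y i ((1 - lam) * y i)) j (y j + lam * y i)

/-- Lower triangular row-stochastic matrix. -/
def LowerRS {n : ℕ} (L : Matrix (Fin n) (Fin n) ℝ) : Prop :=
  (∀ i j, 0 ≤ L i j) ∧ (∀ i j : Fin n, i < j → L i j = 0) ∧ (∀ i, ∑ j, L i j = 1)

/-- Upper triangular row-stochastic matrix. -/
def UpperRS {n : ℕ} (U : Matrix (Fin n) (Fin n) ℝ) : Prop :=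
  (∀ i j, 0 ≤ U i j) ∧ (∀ i j : Fin n, j < i → U i j = 0) ∧ (∀ i, ∑ j, U i j = 1)

/-!
Lay the masses of `y` and of `x` side by side as consecutive intervals of `[0, ∑ y]`, with the
prefix sums as breakpoints. The length of the overlap of block `i` of `y` with block `j` of `x`
(the northwest-corner rule) gives a nonnegative matrix with row sums `y` and column sums `x`;
majorization `psum x ≤ psum y` makes it upper triangular, and normalizing its rows gives `U`.
A nonzero entry `(i, j)` that is not the first one of its row forces the breakpoint `psum x j`
into the interior of block `i` of `y`, so each column `j ≥ 1` holds at most one such entry;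
with at most `n` leading entries this gives `2n - 1`.
-/

noncomputable def overlap (a b c d : ℝ) : ℝ := max 0 (min b d - max a c)

section Overlap

variable {a b c d : ℝ}

lemma overlap_nonneg : 0 ≤ overlap a b c d := le_max_left _ _

lemma overlap_comm : overlap a b c d = overlap c d a b := by
  rw [overlap, overlap, min_comm b d, max_comm a c]

lemma lt_of_overlap_ne_zero (h : overlap a b c d ≠ 0) : a < d ∧ c < b := by
  by_contra! hle
  refine h (max_eq_left ?_)
  by_cases had : a < d
  · linarith [hle had, min_le_left b d, le_max_right a c]
  · linarith [min_le_right b d, le_max_left a c]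

lemma overlap_eq_sub (hab : a ≤ b) (hcd : c ≤ d) :
    overlap a b c d = (min b d - min a d) - (min b c - min a c) := by
  simp only [overlap, max_def, min_def]
  split_ifs <;> linarith

lemma sum_range_overlap {T : ℕ → ℝ} (hT : Monotone T) (n : ℕ) (h0 : T 0 ≤ a) (hab : a ≤ b)
    (hb : b ≤ T n) : ∑ j ∈ range n, overlap a b (T j) (T (j + 1)) = b - a := by
  rw [sum_congr rfl fun j _ => overlap_eq_sub hab (hT j.le_succ),
    sum_range_sub (fun t => min b (T t) - min a (T t))]
  simp only [min_eq_left hb, min_eq_left (hab.trans hb), min_eq_right h0,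
    min_eq_right (h0.trans hab)]
  ring

end Overlap

section PrefixSums

variable {n : ℕ} {x y : Fin n → ℝ}

lemma psum_zero (x : Fin n → ℝ) : psum x 0 = 0 := by simp [psum]

lemma psum_succ (x : Fin n → ℝ) (i : Fin n) : psum x (i + 1) = psum x i + x i := by
  have : ({j : Fin n | (j : ℕ) < i + 1} : Finset (Fin n)) =
      insert i ({j : Fin n | (j : ℕ) < i} : Finset (Fin n)) := by
    ext j
    simp only [mem_filter, mem_univ, true_and, mem_insert, Fin.ext_iff]
    omega
  rw [psum, psum, this, sum_insert (by simp), add_comm]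

lemma psum_of_le (x : Fin n → ℝ) {k : ℕ} (hk : n ≤ k) : psum x k = ∑ i, x i := by
  rw [psum, filter_true_of_mem fun i _ => i.isLt.trans_le hk]

lemma psum_mono (hx : ∀ i, 0 ≤ x i) : Monotone (psum x) := fun _ _ hkl =>
  sum_le_sum_of_subset_of_nonneg (monotone_filter_right _ fun _ _ hi => hi.trans_le hkl)
    fun i _ _ => hx i

lemma psum_nonneg (hx : ∀ i, 0 ≤ x i) (k : ℕ) : 0 ≤ psum x k :=
  psum_zero x ▸ psum_mono hx k.zero_le

lemma Maj.psum_le (h : Maj x y) (k : ℕ) : psum x k ≤ psum y k := by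
  rcases lt_or_ge k n with hk | hk
  · exact h.1 k hk
  · rw [psum_of_le x hk, psum_of_le y hk, h.2]

end PrefixSums

noncomputable def quantileCoupling {n : ℕ} (y x : Fin n → ℝ) : Matrix (Fin n) (Fin n) ℝ :=
  fun i j => overlap (psum y i) (psum y (i + 1)) (psum x j) (psum x (j + 1))

section QuantileCoupling

variable {n : ℕ} {x y : Fin n → ℝ}

lemma quantileCoupling_nonneg (i j : Fin n) : 0 ≤ quantileCoupling y x i j := overlap_nonneg

lemma sum_quantileCoupling_row (hx : ∀ i, 0 ≤ x i) (hy : ∀ i, 0 ≤ y i)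
    (hsum : ∑ i, x i = ∑ i, y i) (i : Fin n) : ∑ j, quantileCoupling y x i j = y i := by
  have hb : psum y (i + 1) ≤ psum x n := by
    rw [psum_of_le x le_rfl, hsum, ← psum_of_le y le_rfl]
    exact psum_mono hy i.isLt
  simp only [quantileCoupling]
  rw [Fin.sum_univ_eq_sum_range
      (fun j => overlap (psum y i) (psum y (i + 1)) (psum x j) (psum x (j + 1))),
    sum_range_overlap (psum_mono hx) n (psum_zero x ▸ psum_nonneg hy i)
      (psum_mono hy i.val.le_succ) hb, psum_succ]
  ring

lemma sum_quantileCoupling_col (hx : ∀ i, 0 ≤ x i) (hy : ∀ i, 0 ≤ y i)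
    (hsum : ∑ i, x i = ∑ i, y i) (j : Fin n) : ∑ i, quantileCoupling y x i j = x j := by
  have hb : psum x (j + 1) ≤ psum y n := by
    rw [psum_of_le y le_rfl, ← hsum, ← psum_of_le x le_rfl]
    exact psum_mono hx j.isLt
  simp only [quantileCoupling, overlap_comm (a := psum y _)]
  rw [Fin.sum_univ_eq_sum_range
      (fun i => overlap (psum x j) (psum x (j + 1)) (psum y i) (psum y (i + 1))),
    sum_range_overlap (psum_mono hy) n (psum_zero y ▸ psum_nonneg hx j)
      (psum_mono hx j.val.le_succ) hb, psum_succ]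
  ring

lemma blockTriangular_quantileCoupling (hy : ∀ i, 0 ≤ y i) (hxy : ∀ k, psum x k ≤ psum y k) :
    (quantileCoupling y x).BlockTriangular id := by
  intro i j hji
  by_contra h
  have hle : (j : ℕ) + 1 ≤ i := hji
  linarith [(lt_of_overlap_ne_zero h).1, hxy (j + 1), psum_mono hy hle]

lemma psum_mem_Ioo_of_quantileCoupling_ne_zero (hx : ∀ i, 0 ≤ x i) {i j k : Fin n}
    (hk : quantileCoupling y x i k ≠ 0) (hkj : k < j) (hj : quantileCoupling y x i j ≠ 0) :
    psum x j ∈ Set.Ioo (psum y i) (psum y (i + 1)) :=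
  ⟨(lt_of_overlap_ne_zero hk).1.trans_le (psum_mono hx (Nat.succ_le_of_lt hkj)),
    (lt_of_overlap_ne_zero hj).2⟩

end QuantileCoupling

section RowNormalize

variable {ι : Type*} [Fintype ι] [DecidableEq ι] {M : Matrix ι ι ℝ}

noncomputable def rowNormalize (M : Matrix ι ι ℝ) : Matrix ι ι ℝ :=
  fun i j => if ∑ k, M i k = 0 then (1 : Matrix ι ι ℝ) i j else M i j / ∑ k, M i k

lemma rowNormalize_mem_rowStochastic (hM : ∀ i j, 0 ≤ M i j) :
    rowNormalize M ∈ rowStochastic ℝ ι := by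
  refine mem_rowStochastic_iff_sum.2 ⟨fun i j => ?_, fun i => ?_⟩ <;>
    by_cases h : ∑ k, M i k = 0
  · simp only [rowNormalize, h, if_true, one_apply]
    split_ifs <;> norm_num
  · simp only [rowNormalize, h, if_false]
    exact div_nonneg (hM i j) (sum_nonneg fun k _ => hM i k)
  · simp [rowNormalize, h, one_apply]
  · simp only [rowNormalize, h, if_false]
    rw [← sum_div, div_self h]

lemma Matrix.BlockTriangular.rowNormalize {α : Type*} [Preorder α] {b : ι → α}
    (hM : M.BlockTriangular b) : (rowNormalize M).BlockTriangular b := by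
  intro i j h
  simp only [_root_.rowNormalize]
  split_ifs
  · exact (blockTriangular_one : (1 : Matrix ι ι ℝ).BlockTriangular b) h
  · rw [hM h, zero_div]

lemma vecMul_rowNormalize (hM : ∀ i j, 0 ≤ M i j) :
    (fun i => ∑ j, M i j) ᵥ* rowNormalize M = fun j => ∑ i, M i j := by
  funext j
  refine sum_congr rfl fun i _ => ?_
  by_cases h : ∑ k, M i k = 0
  · have hij := (sum_eq_zero_iff_of_nonneg fun k _ => hM i k).1 h j (mem_univ j)
    simp [h, hij]
  · simp [rowNormalize, h, mul_div_cancel₀]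

lemma ne_zero_of_rowNormalize_ne_zero {i j k : ι} (hj : rowNormalize M i j ≠ 0)
    (hk : rowNormalize M i k ≠ 0) (hjk : j ≠ k) : M i j ≠ 0 := by
  by_cases h : ∑ l, M i l = 0
  · simp only [rowNormalize, h, if_true, one_apply, ne_eq, ite_eq_right_iff,
      Classical.not_imp] at hj hk
    exact fun _ => hjk (hj.1.symm.trans hk.1)
  · simp only [rowNormalize, h, if_false, ne_eq, div_eq_zero_iff, not_or] at hj
    exact hj.1

end RowNormalize

theorem card_ne_zero_le_two_mul_sub_one {R : Type*} [Zero R] [DecidableEq R] {n : ℕ}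
    (U : Matrix (Fin n) (Fin n) R)
    (h : ∀ j, {i | U i j ≠ 0 ∧ ∃ k < j, U i k ≠ 0}.Subsingleton) :
    #{p : Fin n × Fin n | U p.1 p.2 ≠ 0} ≤ 2 * n - 1 := by
  set N : Finset (Fin n × Fin n) := {p | U p.1 p.2 ≠ 0}
  let preceded (p : Fin n × Fin n) : Prop := ∃ k < p.2, U p.1 k ≠ 0
  have hleading : #(N.filter fun p => ¬ preceded p) ≤ n := by
    refine (card_le_card_of_injOn Prod.fst (fun p _ => mem_coe.2 (mem_univ p.1)) ?_).trans
      (card_univ.trans (Fintype.card_fin n)).le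
    intro p hp q hq hpq
    simp only [N, preceded, coe_filter, mem_filter, mem_univ, true_and,
      not_exists, not_and, not_not] at hp hq
    refine Prod.ext hpq (le_antisymm (not_lt.1 fun hlt => ?_) (not_lt.1 fun hlt => ?_))
    · exact hq.1 (hpq ▸ hp.2 q.2 hlt)
    · exact hp.1 (hpq ▸ hq.2 p.2 hlt)
  have hpreceded : #(N.filter preceded) ≤ n - 1 := by
    refine (card_le_card_of_injOn (fun p => (p.2 : ℕ) - 1) (fun p hp => ?_) ?_).trans
      (card_range (n - 1)).le
    · obtain ⟨-, k, hk, -⟩ := mem_filter.1 hp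
      have : (k : ℕ) < p.2 := hk
      simp only [coe_range, Set.mem_Iio]
      omega
    intro p hp q hq hpq
    simp only [N, preceded, coe_filter, mem_filter, mem_univ, true_and] at hp hq
    obtain ⟨hpU, k, hk, hkU⟩ := hp
    obtain ⟨hqU, l, hl, hlU⟩ := hq
    have hk' : (k : ℕ) < p.2 := hk
    have hl' : (l : ℕ) < q.2 := hl
    have h2 : p.2 = q.2 := Fin.ext (by simp only at hpq; omega)
    exact Prod.ext (h q.2 ⟨h2 ▸ hpU, k, h2 ▸ hk, hkU⟩ ⟨hqU, l, hl, hlU⟩) h2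
  have := card_filter_add_card_filter_not (s := N) preceded
  omega

lemma card_rowNormalize_quantileCoupling_ne_zero {n : ℕ} {x y : Fin n → ℝ}
    (hx : ∀ i, 0 ≤ x i) (hy : ∀ i, 0 ≤ y i) :
    #{p : Fin n × Fin n | rowNormalize (quantileCoupling y x) p.1 p.2 ≠ 0} ≤ 2 * n - 1 := by
  set Q := quantileCoupling y x
  refine card_ne_zero_le_two_mul_sub_one _ fun j i hi i' hi' => ?_
  have mem_Ioo : ∀ {i}, rowNormalize Q i j ≠ 0 ∧ (∃ k < j, rowNormalize Q i k ≠ 0) →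
      psum x j ∈ Set.Ioo (psum y i) (psum y (i + 1)) := by
    rintro i ⟨hij, k, hkj, hik⟩
    exact psum_mem_Ioo_of_quantileCoupling_ne_zero hx
      (ne_zero_of_rowNormalize_ne_zero hik hij hkj.ne) hkj
      (ne_zero_of_rowNormalize_ne_zero hij hik hkj.ne')
  by_contra hne
  have hdisj := (psum_mono hy).pairwise_disjoint_on_Ioo_succ (Fin.val_injective.ne hne)
  simp only [Function.onFun, Order.succ_eq_add_one] at hdisj
  exact Set.disjoint_left.1 hdisj (mem_Ioo hi) (mem_Ioo hi')

theorem stmt14_general {n : ℕ} (x y : Fin n → ℝ)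
    (hx0 : ∀ i, 0 ≤ x i) (hy0 : ∀ i, 0 ≤ y i)
    (hmaj : Maj x y) :
    ∃ U : Matrix (Fin n) (Fin n) ℝ, UpperRS U ∧
      (Finset.filter (fun p : Fin n × Fin n => U p.1 p.2 ≠ 0) Finset.univ).card ≤ 2 * n - 1 ∧
      x = Matrix.vecMul y U := by
  set Q := quantileCoupling y x
  have hQ : ∀ i j, 0 ≤ Q i j := quantileCoupling_nonneg
  obtain ⟨hnonneg, hrow⟩ := mem_rowStochastic_iff_sum.1 (rowNormalize_mem_rowStochastic hQ)
  have htri := (blockTriangular_quantileCoupling hy0 hmaj.psum_le).rowNormalize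
  refine ⟨rowNormalize Q, ⟨hnonneg, fun i j h => htri h, hrow⟩,
    card_rowNormalize_quantileCoupling_ne_zero hx0 hy0, ?_⟩
  calc x = fun j => ∑ i, Q i j := funext fun j => (sum_quantileCoupling_col hx0 hy0 hmaj.2 j).symm
    _ = (fun i => ∑ j, Q i j) ᵥ* rowNormalize Q := (vecMul_rowNormalize hQ).symm
    _ = y ᵥ* rowNormalize Q := by rw [funext (sum_quantileCoupling_row hx0 hy0 hmaj.2)]

theorem stmt14 {n : ℕ} (x y : Fin n → ℝ)
    (hx0 : ∀ i, 0 ≤ x i) (hy0 : ∀ i, 0 ≤ y i)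
    (hxs : Antitone x) (hys : Antitone y)
    (hmaj : Maj x y) :
    ∃ U : Matrix (Fin n) (Fin n) ℝ, UpperRS U ∧
      (Finset.filter (fun p : Fin n × Fin n => U p.1 p.2 ≠ 0) Finset.univ).card ≤ 2 * n - 1 ∧
      x = Matrix.vecMul y U :=
  stmt14_general x y hx0 hy0 hmaj
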